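/- Let Ω⁽ᵏ⁾ be a finite set of size K and for each n ≥ k let Δ⁽ᵏ⁾_n be the convex hull of a finite set of probability vectors on Ω⁽ᵏ⁾ such that the sets are nested: Δ⁽ᵏ⁾_{n+1} ⊆ Δ⁽ᵏ⁾_n. Then every extreme point of the intersection P := ∩_{n>k} Δ⁽ᵏ⁾_n is a limit of a sequence (q_n) with q_n a vertex of Δ⁽ᵏ⁾_n. -/

import Mathlib

/-!
Put `F = {x | ε ≤ dist x p}`. If infinitely many `Δ n` had all their vertices in `F`, then,
since `Δ n` is the convex hull of its vertices, `p` would lie in the convex hull of `Δ m ∩ F`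
for every `m`. By Carathéodory's theorem these are the images of the decreasing compact sets
`stdSimplex × (Δ m ∩ F)^(K+1)` under `(w, y) ↦ ∑ wᵢ yᵢ`, so `p` is a convex combination of
points of `⋂ (Δ m ∩ F) = P ∩ F`, none of which equals `p`: impossible for an extreme point of `P`.
Hence for every `ε` eventually some vertex of `Δ n` is `ε`-close to `p`, and the vertex of
`Δ n` nearest to `p` converges to `p`.
-/

open Filter Topology Set Module

theorem Antitone.biInter_gt_eq_iInter {α : Type*} {s : ℕ → Set α} (hs : Antitone s) (k : ℕ) :
    ⋂ n > k, s n = ⋂ n, s n := by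
  refine Subset.antisymm (fun x hx => mem_iInter.2 fun n => ?_)
    (iInter_mono fun n => subset_iInter fun _ => subset_rfl)
  exact hs (n.le_add_right (k + 1)) (mem_iInter₂.1 hx (n + (k + 1)) (by omega))

theorem mem_image_iInter_of_antitone {X Y : Type*} [TopologicalSpace X] [TopologicalSpace Y]
    [T1Space Y] {C : ℕ → Set X} (hC : Antitone C) (hC₀ : IsCompact (C 0))
    (hCcl : ∀ n, IsClosed (C n)) {f : X → Y} (hf : Continuous f) {y : Y}
    (hy : ∀ n, y ∈ f '' C n) : y ∈ f '' ⋂ n, C n := by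
  have hfiber : IsClosed (f ⁻¹' {y}) := isClosed_singleton.preimage hf
  obtain ⟨x, hx⟩ := (hC₀.inter_right hfiber).nonempty_iInter_of_sequence_nonempty_isCompact_isClosed
    (fun n => C n ∩ f ⁻¹' {y}) (fun n => inter_subset_inter_left _ (hC n.le_succ)) hy
    (fun n => (hCcl n).inter hfiber)
  rw [mem_iInter] at hx
  exact ⟨x, mem_iInter.2 fun n => (hx n).1, (hx 0).2⟩

theorem exists_seq_tendsto_of_eventually_exists_dist_lt {X : Type*} [PseudoMetricSpace X]
    {S : ℕ → Set X} (hfin : ∀ n, (S n).Finite) (hne : ∀ n, (S n).Nonempty) {p : X}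
    (h : ∀ ε > 0, ∀ᶠ n in atTop, ∃ v ∈ S n, dist v p < ε) :
    ∃ q : ℕ → X, (∀ n, q n ∈ S n) ∧ Tendsto q atTop (𝓝 p) := by
  choose q hq hmin using fun n => (S n).exists_min_image (dist · p) (hfin n) (hne n)
  refine ⟨q, hq, Metric.tendsto_nhds.2 fun ε hε => (h ε hε).mono ?_⟩
  rintro n ⟨v, hv, hvp⟩
  exact (hmin n v hv).trans_lt hvp

theorem exists_mem_stdSimplex_sum_smul_eq_of_mem_convexHull {𝕜 E : Type*} [Field 𝕜]
    [LinearOrder 𝕜] [IsStrictOrderedRing 𝕜] [AddCommGroup E] [Module 𝕜 E]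
    [FiniteDimensional 𝕜 E] {s : Set E} {x : E} (hx : x ∈ convexHull 𝕜 s) :
    ∃ w ∈ stdSimplex 𝕜 (Fin (finrank 𝕜 E + 1)), ∃ y : Fin (finrank 𝕜 E + 1) → E,
      (∀ i, y i ∈ s) ∧ ∑ i, w i • y i = x := by
  obtain ⟨ι, _, z, w, hzs, hz, hw₀, hw₁, hwz⟩ := eq_pos_convex_span_of_mem_convexHull hx
  obtain ⟨y₀, hy₀⟩ := convexHull_nonempty_iff.1 ⟨x, hx⟩
  have hcard : Fintype.card ι ≤ Fintype.card (Fin (finrank 𝕜 E + 1)) := by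
    simpa using hz.card_le_finrank_succ.trans
      (Nat.succ_le_succ (Submodule.finrank_le (vectorSpan 𝕜 (range z))))
  obtain ⟨e⟩ := Function.Embedding.nonempty_of_card_le hcard
  have hout : ∀ j ∉ range e, Function.extend e w 0 j = 0 := fun j hj =>
    Function.extend_apply' _ _ _ fun ⟨i, hi⟩ => hj ⟨i, hi⟩
  refine ⟨Function.extend e w 0, ⟨fun j => ?_, ?_⟩, Function.extend e z fun _ => y₀,
    fun j => ?_, ?_⟩
  · by_cases hj : j ∈ range e
    · obtain ⟨i, rfl⟩ := hj
      simpa [e.injective.extend_apply] using (hw₀ i).le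
    · exact (hout j hj).ge
  · rw [← hw₁]
    exact (Fintype.sum_of_injective e e.injective _ _ hout
      fun i => (e.injective.extend_apply _ _ i).symm).symm
  · by_cases hj : j ∈ range e
    · obtain ⟨i, rfl⟩ := hj
      simpa [e.injective.extend_apply] using hzs (mem_range_self i)
    · simpa [Function.extend_apply' _ _ _ fun ⟨i, hi⟩ => hj ⟨i, hi⟩] using hy₀
  · rw [← hwz]
    refine (Fintype.sum_of_injective e e.injective _ _ (fun j hj => by simp [hout j hj])
      fun i => ?_).symm
    simp [e.injective.extend_apply]

section NormedSpace

variable {E : Type*} [NormedAddCommGroup E] [NormedSpace ℝ E]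

theorem Set.Finite.convexHull_extremePoints_convexHull {s : Set E} (hs : s.Finite) :
    convexHull ℝ (extremePoints ℝ (convexHull ℝ s)) = convexHull ℝ s :=
  ((hs.subset extremePoints_convexHull_subset).isClosed_convexHull (𝕜 := ℝ)).closure_eq.symm.trans
    (closure_convexHull_extremePoints (hs.isCompact_convexHull (𝕜 := ℝ)) (convex_convexHull ℝ s))

variable [FiniteDimensional ℝ E]

theorem iInter_convexHull_subset_convexHull_iInter {A : ℕ → Set E} (hA : Antitone A)
    (hc : ∀ n, IsCompact (A n)) : ⋂ n, convexHull ℝ (A n) ⊆ convexHull ℝ (⋂ n, A n) := by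
  intro x hx
  let C : ℕ → Set ((Fin (finrank ℝ E + 1) → ℝ) × (Fin (finrank ℝ E + 1) → E)) :=
    fun n => stdSimplex ℝ _ ×ˢ univ.pi fun _ => A n
  have hxC : x ∈ (fun wy => ∑ i, wy.1 i • wy.2 i) '' ⋂ n, C n := by
    refine mem_image_iInter_of_antitone (fun m n hmn => prod_mono le_rfl
        (pi_mono fun _ _ => hA hmn)) ((isCompact_stdSimplex ℝ _).prod
        (isCompact_univ_pi fun _ => hc 0))
      (fun n => (isClosed_stdSimplex ℝ _).prod (isClosed_set_pi fun _ _ => (hc n).isClosed))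
      (by fun_prop) fun n => ?_
    obtain ⟨w, hw, y, hy, hwy⟩ :=
      exists_mem_stdSimplex_sum_smul_eq_of_mem_convexHull (mem_iInter.1 hx n)
    exact ⟨(w, y), ⟨hw, fun i _ => hy i⟩, hwy⟩
  obtain ⟨⟨w, y⟩, hwy, rfl⟩ := hxC
  rw [mem_iInter] at hwy
  exact (convex_convexHull ℝ _).sum_mem (fun i _ => (hwy 0).1.1 i) (hwy 0).1.2
    fun i _ => subset_convexHull ℝ _ (mem_iInter.2 fun n => (hwy n).2 i trivial)

theorem eventually_exists_mem_extremePoints_dist_lt {Δ : ℕ → Set E} (hanti : Antitone Δ)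
    (hcomp : ∀ n, IsCompact (Δ n)) (hΔ : ∀ n, convexHull ℝ (extremePoints ℝ (Δ n)) = Δ n)
    {p : E} (hp : p ∈ extremePoints ℝ (⋂ n, Δ n)) {ε : ℝ} (hε : 0 < ε) :
    ∀ᶠ n in atTop, ∃ v ∈ extremePoints ℝ (Δ n), dist v p < ε := by
  by_contra h
  simp only [not_eventually, not_exists, not_and, not_lt, frequently_atTop] at h
  let F : Set E := {x | ε ≤ dist x p}
  have hpF : ∀ m, p ∈ convexHull ℝ (Δ m ∩ F) := fun m => by
    obtain ⟨n, hmn, hfar⟩ := h m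
    have hpn : p ∈ convexHull ℝ (extremePoints ℝ (Δ n)) := (hΔ n).symm ▸ mem_iInter.1 hp.1 n
    refine convexHull_mono (fun v hv => ?_) hpn
    exact ⟨hanti hmn (extremePoints_subset hv), hfar v hv⟩
  have hpPF : p ∈ convexHull ℝ (⋂ m, Δ m ∩ F) :=
    iInter_convexHull_subset_convexHull_iInter
      (fun m n hmn => inter_subset_inter_left _ (hanti hmn))
      (fun m => (hcomp m).inter_right (isClosed_le continuous_const (by fun_prop)))
      (mem_iInter.2 hpF)
  have hPF : ⋂ m, Δ m ∩ F ⊆ (⋂ n, Δ n) \ {p} := fun x hx => by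
    rw [mem_iInter] at hx
    refine ⟨mem_iInter.2 fun n => (hx n).1, fun hxp => ?_⟩
    have : ε ≤ dist x p := (hx 0).2
    rw [hxp, dist_self] at this
    linarith
  have hconv : Convex ℝ (⋂ n, Δ n) := convex_iInter fun n => hΔ n ▸ convex_convexHull ℝ _
  exact (hconv.mem_extremePoints_iff_mem_sdiff_convexHull_sdiff.1 hp).2 (convexHull_mono hPF hpPF)

end NormedSpace

theorem stmt4_general (K k : ℕ) (V : ℕ → Finset (Fin K → ℝ))
    (Δ : ℕ → Set (Fin K → ℝ))
    (hΔ : ∀ n, Δ n = convexHull ℝ (V n : Set (Fin K → ℝ)))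
    (hnest : ∀ n, Δ (n + 1) ⊆ Δ n)
    (p : Fin K → ℝ) (hp : p ∈ Set.extremePoints ℝ (⋂ n > k, Δ n)) :
    ∃ q : ℕ → Fin K → ℝ,
      (∀ n > k, q n ∈ Set.extremePoints ℝ (Δ n)) ∧ Tendsto q atTop (𝓝 p) := by
  have hanti : Antitone Δ := antitone_nat_of_succ_le hnest
  rw [hanti.biInter_gt_eq_iInter] at hp
  have hcomp : ∀ n, IsCompact (Δ n) := fun n =>
    hΔ n ▸ (V n).finite_toSet.isCompact_convexHull (𝕜 := ℝ)
  obtain ⟨q, hq, hlim⟩ := exists_seq_tendsto_of_eventually_exists_dist_lt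
    (S := fun n => extremePoints ℝ (Δ n))
    (fun n => (V n).finite_toSet.subset (hΔ n ▸ extremePoints_convexHull_subset))
    (fun n => (hcomp n).extremePoints_nonempty ⟨p, mem_iInter.1 hp.1 n⟩)
    fun ε hε => eventually_exists_mem_extremePoints_dist_lt hanti hcomp
      (fun n => hΔ n ▸ (V n).finite_toSet.convexHull_extremePoints_convexHull) hp hε
  exact ⟨q, fun n _ => hq n, hlim⟩

/-- Let `Δ n` be the convex hull of a finite set `V n` of probability
vectors on a finite set of size `K`, with `Δ (n+1) ⊆ Δ n`. Then every extreme point of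
the intersection `⋂ (n > k), Δ n` is the limit of a sequence `q` with `q n` a vertex
(extreme point) of `Δ n` for all `n > k`. -/
theorem stmt4 (K k : ℕ) (V : ℕ → Finset (Fin K → ℝ))
    (hprob : ∀ n, ∀ v ∈ V n, (∀ i, 0 ≤ v i) ∧ ∑ i, v i = 1)
    (Δ : ℕ → Set (Fin K → ℝ))
    (hΔ : ∀ n, Δ n = convexHull ℝ (V n : Set (Fin K → ℝ)))
    (hnest : ∀ n, Δ (n + 1) ⊆ Δ n)
    (p : Fin K → ℝ) (hp : p ∈ Set.extremePoints ℝ (⋂ n > k, Δ n)) :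
    ∃ q : ℕ → Fin K → ℝ,
      (∀ n > k, q n ∈ Set.extremePoints ℝ (Δ n)) ∧ Tendsto q atTop (𝓝 p) :=
  stmt4_general K k V Δ hΔ hnest p hp
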